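/- arXiv:math/0309400 — 2 statements merged into one kernel-verified Lean document; each statement's English description precedes it below -/
import Mathlib

section
/- Let (G,d₀,d₁) be a cat¹-group. Then the restriction of d₁ to ker d₀, with the conjugation action of Im d₁ on ker d₀, defines a crossed module (ker d₀, Im d₁, d₁|_{ker d₀}). -/
/-- For a cat¹-group (G,d₀,d₁), the restriction of d₁ to ker d₀ with the
conjugation action of Im d₁ on ker d₀ defines a crossed module (ker d₀, Im d₁, d₁|). -/
theorem cat1_to_crossedModule {G : Type*} [Group G] (d₀ d₁ : G →* G)
    (h01 : ∀ x : G, d₀ (d₁ x) = d₁ x) (h10 : ∀ x : G, d₁ (d₀ x) = d₀ x)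
    (hker : ∀ a ∈ d₀.ker, ∀ b ∈ d₁.ker, a * b = b * a) :
    (∀ a ∈ d₀.ker, d₁ a ∈ d₁.range) ∧
    (∀ b ∈ d₁.range, ∀ a ∈ d₀.ker, b * a * b⁻¹ ∈ d₀.ker) ∧
    (∀ b ∈ d₁.range, ∀ a ∈ d₀.ker, d₁ (b * a * b⁻¹) = b * d₁ a * b⁻¹) ∧
    (∀ a ∈ d₀.ker, ∀ a' ∈ d₀.ker, d₁ a * a' * (d₁ a)⁻¹ = a * a' * a⁻¹) := by
  have hd11 : ∀ x : G, d₁ (d₁ x) = d₁ x := by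
    intro x
    calc d₁ (d₁ x) = d₁ (d₀ (d₁ x)) := by rw [h01]
    _ = d₀ (d₁ x) := h10 _
    _ = d₁ x := h01 _
  refine ⟨fun a _ => ⟨a, rfl⟩, ?_, ?_, ?_⟩
  · rintro b ⟨x, rfl⟩ a ha
    simp only [MonoidHom.mem_ker] at ha ⊢
    simp [h01, ha]
  · rintro b ⟨x, rfl⟩ a ha
    simp [hd11]
  · intro a ha a' ha'
    have hc : a⁻¹ * d₁ a ∈ d₁.ker := by
      simp [MonoidHom.mem_ker, hd11]
    have := hker a' ha' _ hc
    have key : d₁ a * a' = a * (a⁻¹ * d₁ a) * a' := by group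
    rw [key, mul_assoc a, ← this]
    group
end

section
/- Let (N,G,ν) be a crossed module and consider the cat¹-group (N⋊G, s₀, s₁) with s₀(n,g)=(1,g), s₁(n,g)=(1,ν(n)g). Then the map φ: (N/[G,N]) × G_{ab} → (N⋊G)_{ab} given by φ([n],[g]) = [(n,g)] is a well-defined group isomorphism, where [G,N] is the normal subgroup of N generated by elements (ᵍn)n⁻¹ and G_{ab}=G/[G,G]. -/
/-!
Both `N ⋊ G → (N ⧸ K) × G_ab`, `(n, g) ↦ ([n], [g])`, and
`(N ⧸ K) × G_ab → (N ⋊ G)_ab`, `([n], [g]) ↦ [(n, 1)] [(1, g)]`, are homomorphisms: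
the first because `K` contains the twists `(ᵍn) n⁻¹`, the second because
`(ᵍn, 1) = (1, g) (n, 1) (1, g)⁻¹` becomes `(n, 1)` in `(N ⋊ G)_ab`. For the first to
factor through `(N ⋊ G)_ab` the target must be abelian, and this is where the Peiffer
identity enters: `a b a⁻¹ b⁻¹ = ^{ν(a)}b · b⁻¹ ∈ K`. The two induced maps are inverse
to each other, as one checks on generators.
-/

namespace QuotientGroup

open scoped commutatorElement

variable {N : Type*} [Group N]

abbrev commGroupOfCommutatorLE (K : Subgroup N) [K.Normal] (h : commutator N ≤ K) :
    CommGroup (N ⧸ K) where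
  mul_comm a b := by
    induction a using QuotientGroup.induction_on with | H a =>
    induction b using QuotientGroup.induction_on with | H b =>
    have hab : ⁅b⁻¹, a⁻¹⁆ ∈ K :=
      h (Subgroup.commutator_mem_commutator (Subgroup.mem_top _) (Subgroup.mem_top _))
    rw [← QuotientGroup.mk_mul, ← QuotientGroup.mk_mul, QuotientGroup.eq]
    simpa [commutatorElement_def, mul_assoc] using hab

end QuotientGroup

namespace SemidirectProduct

variable {N G : Type*} [Group N] [Group G] {φ : G →* MulAut N}

theorem abelianization_of_inl_aut (g : G) (n : N) :
    Abelianization.of (inl (φ g n) : N ⋊[φ] G) = Abelianization.of (inl n) := by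
  rw [inl_aut, map_mul, map_mul, mul_right_comm, ← map_mul, ← map_mul inr, mul_inv_cancel,
    map_one, map_one, one_mul]

theorem normalClosure_aut_mul_inv_le_ker :
    Subgroup.normalClosure {x : N | ∃ g n, x = φ g n * n⁻¹} ≤
      (Abelianization.of.comp (inl : N →* N ⋊[φ] G)).ker :=
  Subgroup.normalClosure_le_normal <| by
    rintro _ ⟨g, n, rfl⟩
    simp [abelianization_of_inl_aut]

variable (K : Subgroup N)

theorem mk_aut_eq (hK : ∀ g n, φ g n * n⁻¹ ∈ K) (g : G) (n : N) :
    (φ g n : N ⧸ K) = n := by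
  rw [QuotientGroup.eq]
  simpa using hK g n⁻¹

variable [K.Normal]

def leftModHom (hK : ∀ g n, φ g n * n⁻¹ ∈ K) : N ⋊[φ] G →* N ⧸ K where
  toFun x := x.left
  map_one' := rfl
  map_mul' x y := by
    rw [mul_left, QuotientGroup.mk_mul, mk_aut_eq K hK]

/-- Together the hypotheses force `K` to be the kernel of `N → (N ⋊ G)_ab`. -/
def abelianizationEquiv (hK : ∀ g n, φ g n * n⁻¹ ∈ K)
    (hK_le : K ≤ (Abelianization.of.comp (inl : N →* N ⋊[φ] G)).ker) (hcomm : commutator N ≤ K) :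
    (N ⧸ K) × Abelianization G ≃* Abelianization (N ⋊[φ] G) :=
  letI := QuotientGroup.commGroupOfCommutatorLE K hcomm
  MonoidHom.toMulEquiv
    ((QuotientGroup.lift K (Abelianization.of.comp inl) hK_le).coprod (Abelianization.map inr))
    (Abelianization.lift ((leftModHom K hK).prod (Abelianization.of.comp rightHom)))
    (MonoidHom.ext fun ⟨a, b⟩ => by
      induction a using QuotientGroup.induction_on
      obtain ⟨g, rfl⟩ : ∃ g, Abelianization.of g = b := QuotientGroup.mk_surjective b
      simp [leftModHom])
    (by ext x; simp [leftModHom, ← map_mul, inl_left_mul_inr_right])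

@[simp]
theorem abelianizationEquiv_mk_of (hK : ∀ g n, φ g n * n⁻¹ ∈ K)
    (hK_le : K ≤ (Abelianization.of.comp (inl : N →* N ⋊[φ] G)).ker) (hcomm : commutator N ≤ K)
    (n : N) (g : G) :
    abelianizationEquiv K hK hK_le hcomm ((n : N ⧸ K), Abelianization.of g) =
      Abelianization.of (⟨n, g⟩ : N ⋊[φ] G) := by
  simp [abelianizationEquiv]

end SemidirectProduct

open scoped commutatorElement in
theorem commutator_le_of_peiffer {N G : Type*} [Group N] [Group G] {φ : G →* MulAut N}
    {ν : N → G} (hpeif : ∀ n n' : N, φ (ν n) n' = n * n' * n⁻¹) {K : Subgroup N}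
    (hK : ∀ g n, φ g n * n⁻¹ ∈ K) : commutator N ≤ K :=
  Subgroup.commutator_le.2 fun a _ b _ => by
    simpa [hpeif, commutatorElement_def] using hK (ν a) b

theorem semidirect_abelianization_iso_general {N G : Type*} [Group N] [Group G]
    (φ : G →* MulAut N) (ν : N →* G)
    (hpeif : ∀ n n' : N, φ (ν n) n' = n * n' * n⁻¹)
    (K : Subgroup N)
    (hK : K = Subgroup.normalClosure {x : N | ∃ (g : G) (n : N), x = φ g n * n⁻¹})
    (hKnormal : K.Normal) :
    ∃ e : (N ⧸ K) × Abelianization G ≃* Abelianization (N ⋊[φ] G),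
      ∀ (n : N) (g : G),
        e (QuotientGroup.mk n, Abelianization.of g) =
          Abelianization.of (⟨n, g⟩ : N ⋊[φ] G) := by
  have hgen : ∀ g n, φ g n * n⁻¹ ∈ K := fun g n => hK ▸ Subgroup.subset_normalClosure ⟨g, n, rfl⟩
  have hK_le : K ≤ (Abelianization.of.comp (SemidirectProduct.inl : N →* N ⋊[φ] G)).ker :=
    hK ▸ SemidirectProduct.normalClosure_aut_mul_inv_le_ker
  have hcomm : commutator N ≤ K := commutator_le_of_peiffer hpeif hgen
  exact ⟨SemidirectProduct.abelianizationEquiv K hgen hK_le hcomm,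
    SemidirectProduct.abelianizationEquiv_mk_of K hgen hK_le hcomm⟩

/-- For a crossed module (N,G,ν), the map
φ : (N/[G,N]) × G_ab → (N⋊G)_ab, ([n],[g]) ↦ [(n,g)] is a well-defined group
isomorphism, where [G,N] is the normal subgroup of N generated by the elements (ᵍn)n⁻¹. -/
theorem semidirect_abelianization_iso {N G : Type*} [Group N] [Group G]
    (φ : G →* MulAut N) (ν : N →* G)
    (heq : ∀ (g : G) (n : N), ν (φ g n) = g * ν n * g⁻¹)
    (hpeif : ∀ n n' : N, φ (ν n) n' = n * n' * n⁻¹)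
    (K : Subgroup N)
    (hK : K = Subgroup.normalClosure {x : N | ∃ (g : G) (n : N), x = φ g n * n⁻¹})
    (hKnormal : K.Normal) :
    ∃ e : (N ⧸ K) × Abelianization G ≃* Abelianization (N ⋊[φ] G),
      ∀ (n : N) (g : G),
        e (QuotientGroup.mk n, Abelianization.of g) =
          Abelianization.of (⟨n, g⟩ : N ⋊[φ] G) :=
  semidirect_abelianization_iso_general φ ν hpeif K hK hKnormal
end
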